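/- The Seidl co-motion functions in one dimension satisfy the group law: f_i equals the i-fold composition of f₁ with itself for i = 1,…,N−1, and the N-fold composition of f₁ equals the identity almost everywhere with respect to ρ. -/

import Mathlib

/-!
`G` is a strictly increasing continuous bijection `ℝ → (0, 1)`, so `G⁻¹` inverts it on `(0, 1)`
and `G ∘ f_i = R_{i/N} ∘ G`, where `R_t y = fract (y + t)` is the rotation of the circle `[0, 1)`.
Since `R_{1/N}^[i] = R_{i/N}` and `R_1 = id`, the group law holds at every `r` for which no
`G r + k / N` is an integer (elsewhere the formula evaluates `G⁻¹` at `1`, outside the range of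
`G`). Those exceptional `r` form a countable set, which is null for `ρ dx`.
-/

open MeasureTheory Set Filter Topology Function

theorem StrictMono.range_eq_Ioo_of_tendsto {α β : Type*} [LinearOrder α] [TopologicalSpace α]
    [PreconnectedSpace α] [Nonempty α] [NoMinOrder α] [NoMaxOrder α]
    [LinearOrder β] [TopologicalSpace β] [OrderClosedTopology β] {f : α → β} {a b : β}
    (hmono : StrictMono f) (hf : Continuous f)
    (hbot : Tendsto f atBot (𝓝 a)) (htop : Tendsto f atTop (𝓝 b)) :
    range f = Ioo a b := by
  refine Subset.antisymm ?_ fun y hy => ?_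
  · rintro _ ⟨x, rfl⟩
    obtain ⟨x₀, hx₀⟩ := exists_lt x
    obtain ⟨x₁, hx₁⟩ := exists_gt x
    exact ⟨(hmono.monotone.le_of_tendsto hbot x₀).trans_lt (hmono hx₀),
      (hmono hx₁).trans_le (hmono.monotone.ge_of_tendsto htop x₁)⟩
  exact mem_range_of_exists_le_of_exists_ge hf (hbot.eventually (eventually_le_nhds hy.1)).exists
    (htop.eventually (eventually_ge_nhds hy.2)).exists

section CumulativeDistribution

variable {ρ : ℝ → ℝ}

theorem strictMono_integral_Iic (hρint : Integrable ρ) (hρpos : ∀ r, 0 < ρ r) :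
    StrictMono fun r => ∫ x in Iic r, ρ x := by
  intro a b hab
  have hdiff := intervalIntegral.integral_Iic_sub_Iic hρint.integrableOn hρint.integrableOn
    (f := ρ) (a := a) (b := b) (μ := volume)
  have hpos := intervalIntegral.intervalIntegral_pos_of_pos hρint.intervalIntegrable hρpos hab
  simp only
  linarith

theorem continuous_integral_Iic (hρint : Integrable ρ) :
    Continuous fun r => ∫ x in Iic r, ρ x := by
  have hsplit : ∀ r, ∫ x in Iic r, ρ x = (∫ x in Iic 0, ρ x) + ∫ x in 0..r, ρ x := by
    intro r
    rw [← intervalIntegral.integral_Iic_sub_Iic hρint.integrableOn hρint.integrableOn]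
    ring
  exact (continuous_const.add (intervalIntegral.continuous_primitive
    (fun _ _ => hρint.intervalIntegrable) 0)).congr fun r => (hsplit r).symm

theorem tendsto_integral_Iic_atTop (hρint : Integrable ρ) :
    Tendsto (fun r => ∫ x in Iic r, ρ x) atTop (𝓝 (∫ x, ρ x)) :=
  (aecover_Iic tendsto_id).integral_tendsto_of_countably_generated hρint

end CumulativeDistribution

theorem Int.fract_fract_add {R : Type*} [Ring R] [LinearOrder R] [IsStrictOrderedRing R]
    [FloorRing R] (a b : R) : fract (fract a + b) = fract (a + b) := by
  conv_rhs => rw [← Int.fract_add_floor a, add_right_comm, Int.fract_add_intCast]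

theorem fract_add_eq_ite {x t : ℝ} (hx : x ∈ Ico 0 1) (ht : t ∈ Icc 0 1) (hxt : x + t ≠ 1) :
    Int.fract (x + t) = if x ≤ 1 - t then x + t else x + t - 1 := by
  split_ifs with h
  · exact Int.fract_eq_self.2 ⟨by linarith [hx.1, ht.1], by grind⟩
  · rw [← Int.fract_sub_one]
    exact Int.fract_eq_self.2 ⟨by linarith, by linarith [hx.2, ht.2]⟩

theorem countable_setOf_fract_add_eq_zero (c : ℝ) :
    {y : ℝ | Int.fract (y + c) = 0}.Countable := by
  refine (countable_range fun m : ℤ => (m : ℝ) - c).mono fun y hy => ?_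
  obtain ⟨m, hm⟩ := Int.fract_eq_zero_iff.1 hy
  exact ⟨m, by simp only [hm]; ring⟩

theorem ae_forall_fract_add_ne_zero {G : ℝ → ℝ} (hG : Injective G) (c : ℕ → ℝ) :
    ∀ᵐ r, ∀ k, Int.fract (G r + c k) ≠ 0 := by
  refine ae_all_iff.2 fun k => ?_
  simp only [ae_iff, ne_eq, not_not]
  exact ((countable_setOf_fract_add_eq_zero (c k)).preimage hG).measure_zero volume

noncomputable def genInv (G : ℝ → ℝ) (y : ℝ) : ℝ := sInf {s | y < G s}

noncomputable def seidlMap (G : ℝ → ℝ) (N i : ℕ) (r : ℝ) : ℝ :=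
  if G r ≤ ((N : ℝ) - i) / N then genInv G (G r + i / N) else genInv G (G r + i / N - 1)

section Seidl

variable {G : ℝ → ℝ}

theorem genInv_apply (hG : StrictMono G) (s : ℝ) : genInv G (G s) = s := by
  rw [genInv, show {t | G s < G t} = Ioi s from ext fun _ => hG.lt_iff_lt, csInf_Ioi]

theorem apply_genInv (hG : StrictMono G) {y : ℝ} (hy : y ∈ range G) : G (genInv G y) = y := by
  obtain ⟨s, rfl⟩ := hy
  rw [genInv_apply hG]

theorem seidlMap_eq_genInv_fract {N i : ℕ} (hrange : range G = Ioo 0 1) (hN : 0 < N)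
    (hi : i ≤ N) {r : ℝ} (hr : Int.fract (G r + i / N) ≠ 0) :
    seidlMap G N i r = genInv G (Int.fract (G r + i / N)) := by
  have hGr : G r ∈ Ioo 0 1 := hrange ▸ mem_range_self r
  have hiN : (i : ℝ) / N ∈ Icc 0 1 :=
    ⟨by positivity, div_le_one_of_le₀ (by exact_mod_cast hi) (Nat.cast_nonneg N)⟩
  have hne : G r + i / N ≠ 1 := fun h => hr (by rw [h, Int.fract_one])
  rw [seidlMap, sub_div, div_self (by positivity),
    fract_add_eq_ite (Ioo_subset_Ico_self hGr) hiN hne, apply_ite (genInv G)]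

theorem apply_seidlMap {N i : ℕ} (hG : StrictMono G) (hrange : range G = Ioo 0 1) (hN : 0 < N)
    (hi : i ≤ N) {r : ℝ} (hr : Int.fract (G r + i / N) ≠ 0) :
    G (seidlMap G N i r) = Int.fract (G r + i / N) := by
  rw [seidlMap_eq_genInv_fract hrange hN hi hr, apply_genInv hG]
  rw [hrange]
  exact ⟨(Int.fract_nonneg _).lt_of_ne' hr, Int.fract_lt_one _⟩

theorem apply_iterate_seidlMap_one {N : ℕ} (hG : StrictMono G) (hrange : range G = Ioo 0 1)
    (hN : 0 < N) {r : ℝ} (hr : ∀ k : ℕ, Int.fract (G r + k / N) ≠ 0) (j : ℕ) :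
    G ((seidlMap G N 1)^[j] r) = Int.fract (G r + j / N) := by
  induction j with
  | zero =>
    have hGr : G r ∈ Ioo 0 1 := hrange ▸ mem_range_self r
    rw [iterate_zero_apply, Nat.cast_zero, zero_div, add_zero,
      Int.fract_eq_self.2 ⟨hGr.1.le, hGr.2⟩]
  | succ j ih =>
    have hstep : Int.fract (G ((seidlMap G N 1)^[j] r) + (1 : ℕ) / N)
        = Int.fract (G r + (j + 1 : ℕ) / N) := by
      rw [ih, Int.fract_fract_add, add_assoc, ← add_div, ← Nat.cast_add]
    rw [iterate_succ_apply', apply_seidlMap hG hrange hN hN (hstep ▸ hr _), hstep]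

theorem seidlMap_self {N : ℕ} (hG : StrictMono G) (hrange : range G = Ioo 0 1) (hN : 0 < N)
    (r : ℝ) : seidlMap G N N r = r := by
  have hGr : 0 < G r := (hrange ▸ mem_range_self r : G r ∈ Ioo 0 1).1
  rw [seidlMap, sub_self, zero_div, if_neg hGr.not_ge, div_self (by positivity),
    add_sub_cancel_right, genInv_apply hG]

theorem seidlMap_eq_iterate {N i : ℕ} (hG : StrictMono G) (hrange : range G = Ioo 0 1)
    (hN : 0 < N) (hi : i ≤ N) {r : ℝ} (hr : ∀ k : ℕ, Int.fract (G r + k / N) ≠ 0) :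
    seidlMap G N i r = (seidlMap G N 1)^[i] r :=
  hG.injective <| by
    rw [apply_seidlMap hG hrange hN hi (hr i), apply_iterate_seidlMap_one hG hrange hN hr]

end Seidl

theorem seidl_group_law_general (N : ℕ) (hN : 1 ≤ N)
    (ρ : ℝ → ℝ) (hρpos : ∀ r, 0 < ρ r)
    (hρint : Integrable ρ) (hρN : ∫ r, ρ r = N) :
    let G : ℝ → ℝ := fun r => (∫ x in Set.Iic r, ρ x) / N
    let Ginv : ℝ → ℝ := fun y => sInf {s : ℝ | y < G s}
    let f : ℕ → ℝ → ℝ := fun i r =>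
      if G r ≤ ((N : ℝ) - i) / N then Ginv (G r + i / N) else Ginv (G r + i / N - 1)
    let μ : Measure ℝ := volume.withDensity fun r => ENNReal.ofReal (ρ r)
    (∀ i : ℕ, 1 ≤ i → i ≤ N - 1 → ∀ᵐ r ∂μ, f i r = (f 1)^[i] r) ∧
    (∀ᵐ r ∂μ, (f 1)^[N] r = r) := by
  intro G Ginv f μ
  have hG : StrictMono G := (strictMono_integral_Iic hρint hρpos).div_const (by positivity)
  have hrange : range G = Ioo 0 1 := by
    refine hG.range_eq_Ioo_of_tendsto ((continuous_integral_Iic hρint).div_const _) ?_ ?_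
    · simpa using (tendsto_integral_Iic_zero tendsto_id).div_const (N : ℝ)
    · simpa [hρN, div_self (by positivity : (N : ℝ) ≠ 0)] using
        (tendsto_integral_Iic_atTop hρint).div_const (N : ℝ)
  have hgood : ∀ᵐ r ∂μ, ∀ k : ℕ, Int.fract (G r + k / N) ≠ 0 :=
    (withDensity_absolutelyContinuous _ _).ae_le (ae_forall_fract_add_ne_zero hG.injective _)
  refine ⟨fun i _ hi => ?_, ?_⟩ <;> filter_upwards [hgood] with r hr
  · exact seidlMap_eq_iterate hG hrange hN (by omega) hr
  · exact (seidlMap_eq_iterate hG hrange hN le_rfl hr).symm.trans (seidlMap_self hG hrange hN r)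

/-- **Group law for the Seidl co-motion functions in one dimension.**
Let `ρ : ℝ → ℝ` be a continuous, everywhere positive, integrable density with
`∫ρ = N`, with cumulative distribution `G(r) = ∫_{−∞}^r ρ/N`, generalized inverse
`G⁻¹(y) = inf {s : G(s) > y}`, and Seidl maps
`f_i(r) = G⁻¹(G(r) + i/N)` if `G(r) ≤ (N−i)/N`, `f_i(r) = G⁻¹(G(r) + i/N − 1)`
otherwise.  Then, almost everywhere with respect to `ρ`: `f_i` equals the `i`-fold
composition of `f₁` with itself for `i = 1,…,N−1`, and the `N`-fold composition of
`f₁` equals the identity. -/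
theorem seidl_group_law (N : ℕ) (hN : 1 ≤ N)
    (ρ : ℝ → ℝ) (hρc : Continuous ρ) (hρpos : ∀ r, 0 < ρ r)
    (hρint : Integrable ρ) (hρN : ∫ r, ρ r = N) :
    let G : ℝ → ℝ := fun r => (∫ x in Set.Iic r, ρ x) / N
    let Ginv : ℝ → ℝ := fun y => sInf {s : ℝ | y < G s}
    let f : ℕ → ℝ → ℝ := fun i r =>
      if G r ≤ ((N : ℝ) - i) / N then Ginv (G r + i / N) else Ginv (G r + i / N - 1)
    let μ : Measure ℝ := volume.withDensity fun r => ENNReal.ofReal (ρ r)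
    (∀ i : ℕ, 1 ≤ i → i ≤ N - 1 → ∀ᵐ r ∂μ, f i r = (f 1)^[i] r) ∧
    (∀ᵐ r ∂μ, (f 1)^[N] r = r) :=
  seidl_group_law_general N hN ρ hρpos hρint hρN
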